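/- Expectation values of the ladder operators in a general coherent state: for every n : ℕ, every normalized fiducial vector Ψ₀ and all Euler angles Ω = (φ, θ, ψ), ⟨ R(Ω)Ψ₀ , S₊ · (R(Ω)Ψ₀) ⟩ = A₀ sin θ · e^{iφ} + A₂(Ω), and ⟨ R(Ω)Ψ₀ , S₋ · (R(Ω)Ψ₀) ⟩ equals the complex conjugate of ⟨ R(Ω)Ψ₀ , S₊ · (R(Ω)Ψ₀) ⟩; here ⟨·,·⟩ is the standard Hermitian inner product on ℂ^{n+1} (conjugate-linear in the first argument). -/

import Mathlib

open Matrix Complex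

/-- Spin operator `S₃` for `2s = n`: diagonal with entries `j - n/2`. -/
noncomputable def S3 (n : ℕ) : Matrix (Fin (n+1)) (Fin (n+1)) ℂ :=
  Matrix.diagonal fun j => (j : ℂ) - (n : ℂ) / 2

/-- Raising operator `S₊`: `(S₊)_{k+1,k} = √((k+1)(n-k))`. -/
noncomputable def Sp (n : ℕ) : Matrix (Fin (n+1)) (Fin (n+1)) ℂ :=
  Matrix.of fun j k =>
    if (j : ℕ) = (k : ℕ) + 1 then (Real.sqrt (((k : ℕ) + 1) * (n - (k : ℕ))) : ℂ) else 0

/-- Lowering operator `S₋ = S₊ᴴ`. -/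
noncomputable def Sm (n : ℕ) : Matrix (Fin (n+1)) (Fin (n+1)) ℂ := (Sp n)ᴴ

/-- `S₂ = (S₊ - S₋)/(2i)`. -/
noncomputable def S2 (n : ℕ) : Matrix (Fin (n+1)) (Fin (n+1)) ℂ :=
  (2 * Complex.I)⁻¹ • (Sp n - Sm n)

attribute [local instance] Matrix.normedAddCommGroup Matrix.normedSpace

/-- Rotation matrix `R(φ,θ,ψ) = exp(-iφS₃)·exp(-iθS₂)·exp(-iψS₃)`. -/
noncomputable def Rot (n : ℕ) (φ θ ψ : ℝ) : Matrix (Fin (n+1)) (Fin (n+1)) ℂ :=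
  NormedSpace.exp ((-Complex.I * (φ : ℂ)) • S3 n) *
    NormedSpace.exp ((-Complex.I * (θ : ℂ)) • S2 n) *
      NormedSpace.exp ((-Complex.I * (ψ : ℂ)) • S3 n)


/-- `f_j = √(j(n-j+1))`. -/
noncomputable def fc (n j : ℕ) : ℝ := Real.sqrt (j * (n - j + 1))

/-- `A₀ = Σ_j (j - n/2)|c_j|²`. -/
noncomputable def A0 (n : ℕ) (c : ℕ → ℂ) : ℝ :=
  ∑ j ∈ Finset.range (n+1), ((j : ℝ) - (n : ℝ) / 2) * ‖c j‖ ^ 2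

/-- `A₂(Ω) = ½ Σ_{j=1}^n f_j e^{iφ}[(1+cos θ)e^{iψ}conj(c_j)c_{j-1}
           - (1-cos θ)e^{-iψ}c_j conj(c_{j-1})]`. -/
noncomputable def A2 (n : ℕ) (c : ℕ → ℂ) (φ θ ψ : ℝ) : ℂ :=
  (1 / 2 : ℂ) * ∑ j ∈ Finset.Icc 1 n, (fc n j : ℂ) * Complex.exp (Complex.I * (φ : ℂ)) *
    ((1 + (Real.cos θ : ℂ)) * Complex.exp (Complex.I * (ψ : ℂ)) *
        (starRingEnd ℂ) (c j) * c (j - 1) -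
      (1 - (Real.cos θ : ℂ)) * Complex.exp (-(Complex.I * (ψ : ℂ))) *
        c j * (starRingEnd ℂ) (c (j - 1)))

/-!
Conjugation by `exp (z • a)` multiplies every eigenvector `b` of `ad a` (`⁅a, b⁆ = ν • b`) by
`exp (z * ν)`. The spin matrices satisfy `⁅S₃, S₊⁆ = S₊`, `⁅S₃, S₋⁆ = -S₋`, `⁅S₊, S₋⁆ = 2 S₃`, so
`S₊` and `S₋` are eigenvectors of `ad S₃`, while `S₊ = ½ u + ½ v + i S₂` with
`u, v = (S₊ + S₋)/2 ∓ i S₃` eigenvectors of `ad S₂` for the eigenvalues `±1`. Hence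
`R(Ω)ᴴ S₊ R(Ω) = e^{iφ} (sin θ S₃ + ½(1 + cos θ) e^{iψ} S₊ - ½(1 - cos θ) e^{-iψ} S₋)`, and the
expectations of `S₃`, `S₊`, `S₋` in `Ψ₀` are `A₀`, `X` and `conj X` with
`X = Σ f_j conj(c_j) c_{j-1}`. The claim about `S₋` is just `S₋ = S₊ᴴ`.
-/

-- Lie brackets in an associative ring are commutators: `⁅x, y⁆ = x * y - y * x`.
attribute [local instance] LieRing.ofAssociativeRing LieAlgebra.ofAssociativeAlgebra

section ExpConj

variable {𝔸 : Type*} [NormedRing 𝔸] [NormedAlgebra ℂ 𝔸]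

noncomputable def expConj (a : 𝔸) : 𝔸 →ₗ[ℂ] 𝔸 :=
  LinearMap.mulLeftRight ℂ (NormedSpace.exp a, NormedSpace.exp (-a))

@[simp]
lemma expConj_apply (a x : 𝔸) : expConj a x = NormedSpace.exp a * x * NormedSpace.exp (-a) :=
  rfl

variable [CompleteSpace 𝔸]

lemma expConj_smul_of_lie_eq_smul {a b : 𝔸} {ν : ℂ} (h : ⁅a, b⁆ = ν • b) (z : ℂ) :
    expConj (z • a) b = Complex.exp (z * ν) • b := by
  let +nondep : NormedAlgebra ℚ 𝔸 := .restrictScalars ℚ ℂ 𝔸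
  have hshift : SemiconjBy b (z • a + algebraMap ℂ 𝔸 (z * ν)) (z • a) := by
    have : b * a + ν • b = a * b := by rw [← h, Ring.lie_def]; abel
    rw [SemiconjBy, mul_add, ← Algebra.commutes, ← Algebra.smul_def, mul_smul_comm,
      smul_mul_assoc, ← smul_smul, ← smul_add, this]
  have hexp : NormedSpace.exp (algebraMap ℂ 𝔸 (z * ν)) = Complex.exp (z * ν) • 1 := by
    rw [← NormedSpace.algebraMap_exp_comm, ← Complex.exp_eq_exp_ℂ, Algebra.algebraMap_eq_smul_one]
  have hinv : NormedSpace.exp (z • a) * NormedSpace.exp (-(z • a)) = 1 := by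
    rw [← NormedSpace.exp_add_of_commute (Commute.refl _).neg_right, add_neg_cancel,
      NormedSpace.exp_zero]
  rw [expConj_apply, ← hshift.exp_right.eq,
    NormedSpace.exp_add_of_commute (Algebra.commutes _ _).symm, hexp, mul_smul_one,
    mul_smul_comm, smul_mul_assoc, mul_assoc, hinv, mul_one]

lemma expConj_smul_self (a : 𝔸) (z : ℂ) : expConj (z • a) a = a := by
  simpa using expConj_smul_of_lie_eq_smul (b := a) (ν := 0) (by rw [lie_self, zero_smul]) z

end ExpConj

structure IsLadderTriple {𝔸 : Type*} [Ring 𝔸] (t p m : 𝔸) : Prop where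
  lie_raise : ⁅t, p⁆ = p
  lie_lower : ⁅t, m⁆ = -m
  lie_raise_lower : ⁅p, m⁆ = 2 • t

namespace IsLadderTriple

variable {𝔸 : Type*} [NormedRing 𝔸] [NormedAlgebra ℂ 𝔸] [CompleteSpace 𝔸] {t p m : 𝔸}

lemma expConj_smul_raise (H : IsLadderTriple t p m) (z : ℂ) :
    expConj (z • t) p = Complex.exp z • p := by
  simpa using expConj_smul_of_lie_eq_smul (ν := 1) (by rw [H.lie_raise, one_smul]) z

lemma expConj_smul_lower (H : IsLadderTriple t p m) (z : ℂ) :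
    expConj (z • t) m = Complex.exp (-z) • m := by
  simpa using expConj_smul_of_lie_eq_smul (ν := -1) (by rw [H.lie_lower, neg_one_smul]) z

lemma expConj_yRotation_raise (H : IsLadderTriple t p m) (z : ℂ) :
    expConj ((I * z) • (2 * I)⁻¹ • (p - m)) p =
      Complex.sin z • t + ((1 + Complex.cos z) / 2) • p - ((1 - Complex.cos z) / 2) • m := by
  set w := (2 * I)⁻¹ • (p - m)
  set u := (2⁻¹ : ℂ) • (p + m) - I • t
  set v := (2⁻¹ : ℂ) • (p + m) + I • t
  have hpt : ⁅p, t⁆ = -p := by rw [← lie_skew, H.lie_raise]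
  have hmt : ⁅m, t⁆ = m := by rw [← lie_skew, H.lie_lower, neg_neg]
  have hmp : ⁅m, p⁆ = -(2 • t) := by rw [← lie_skew, H.lie_raise_lower]
  have hu : ⁅w, u⁆ = (1 : ℂ) • u := by
    simp only [w, u, lie_add, lie_sub, sub_lie, lie_smul, smul_lie, lie_self,
      H.lie_raise_lower, hpt, hmt, hmp]
    match_scalars <;> ring_nf <;> norm_num [I_sq]
  have hv : ⁅w, v⁆ = (-1 : ℂ) • v := by
    simp only [w, v, lie_add, sub_lie, lie_smul, smul_lie, lie_self,
      H.lie_raise_lower, hpt, hmt, hmp]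
    match_scalars <;> ring_nf <;> norm_num [I_sq]
  have hp : p = (2⁻¹ : ℂ) • u + (2⁻¹ : ℂ) • v + I • w := by
    simp only [w, u, v]
    match_scalars <;> ring_nf <;> norm_num [I_sq]
  have hexp : Complex.exp (I * z * 1) = Complex.cos z + Complex.sin z * I := by
    rw [mul_one, mul_comm, Complex.exp_mul_I]
  have hexp_neg : Complex.exp (I * z * -1) = Complex.cos z - Complex.sin z * I := by
    rw [show I * z * -1 = -z * I by ring, Complex.exp_mul_I, Complex.cos_neg, Complex.sin_neg]
    ring
  conv_lhs => rw [hp]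
  rw [map_add, map_add, map_smul, map_smul, map_smul, expConj_smul_of_lie_eq_smul hu,
    expConj_smul_of_lie_eq_smul hv, expConj_smul_self, hexp, hexp_neg]
  simp only [w, u, v]
  match_scalars <;> ring_nf <;> norm_num [I_sq] <;> ring

lemma expConj_eulerRotation_raise (H : IsLadderTriple t p m) (φ θ ψ : ℂ) :
    expConj ((I * ψ) • t) (expConj ((I * θ) • (2 * I)⁻¹ • (p - m)) (expConj ((I * φ) • t) p)) =
      Complex.exp (I * φ) • (Complex.sin θ • t +
        ((1 + Complex.cos θ) / 2 * Complex.exp (I * ψ)) • p -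
        ((1 - Complex.cos θ) / 2 * Complex.exp (-(I * ψ))) • m) := by
  rw [H.expConj_smul_raise, map_smul, H.expConj_yRotation_raise, map_smul, map_sub, map_add,
    map_smul, map_smul, map_smul, expConj_smul_self, H.expConj_smul_raise, H.expConj_smul_lower,
    smul_smul, smul_smul]

end IsLadderTriple

lemma Fin.sum_ite_val_eq {M : Type*} [AddCommMonoid M] {N : ℕ} (a : ℕ) (g : Fin N → M) :
    ∑ x : Fin N, (if (x : ℕ) = a then g x else 0) = if h : a < N then g ⟨a, h⟩ else 0 := by
  split_ifs with h
  · rw [Fintype.sum_eq_single ⟨a, h⟩ fun x hx => if_neg fun hxa => hx (Fin.ext hxa), if_pos rfl]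
  · exact Finset.sum_eq_zero fun x _ => if_neg fun (hxa : (x : ℕ) = a) => h (hxa ▸ x.isLt)

namespace Matrix

lemma ext_of_mulVec_val {α m : Type*} [NonAssocSemiring α] {N : ℕ} {A B : Matrix m (Fin N) α}
    (h : ∀ c : ℕ → α, (A *ᵥ fun k => c k) = B *ᵥ fun k => c k) : A = B :=
  ext_of_mulVec_single fun i => by
    convert h (fun k => if k = i then 1 else 0) using 2 <;>
      ext k <;> simp [Pi.single_apply, Fin.val_inj]

lemma star_mulVec_dotProduct_mulVec_mulVec {α m : Type*} [CommSemiring α] [StarRing α]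
    [Fintype m] (R X : Matrix m m α) (v : m → α) :
    star (R *ᵥ v) ⬝ᵥ (X *ᵥ (R *ᵥ v)) = star v ⬝ᵥ ((Rᴴ * X * R) *ᵥ v) := by
  rw [star_mulVec, mulVec_mulVec, ← dotProduct_mulVec, mulVec_mulVec, ← mul_assoc]

lemma star_dotProduct_conjTranspose_mulVec {α m : Type*} [CommSemiring α] [StarRing α]
    [Fintype m] (A : Matrix m m α) (w : m → α) :
    star w ⬝ᵥ (Aᴴ *ᵥ w) = star (star w ⬝ᵥ (A *ᵥ w)) := by
  rw [star_dotProduct, star_mulVec, conjTranspose_conjTranspose, ← dotProduct_mulVec]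

lemma IsHermitian.conjTranspose_exp_neg_I_mul_smul {m : Type*} [Fintype m] [DecidableEq m]
    {A : Matrix m m ℂ} (hA : A.IsHermitian) (r : ℝ) :
    (NormedSpace.exp ((-I * r) • A))ᴴ = NormedSpace.exp ((I * r) • A) := by
  rw [← exp_conjTranspose, conjTranspose_smul, hA.eq]
  congr 2
  simp [Complex.conj_ofReal]

end Matrix

lemma fc_zero (n : ℕ) : fc n 0 = 0 := by simp [fc]

lemma fc_succ_self (n : ℕ) : fc n (n + 1) = 0 := by simp [fc]

lemma fc_sq {n j : ℕ} (hj : j ≤ n + 1) : (fc n j : ℂ) ^ 2 = j * (n - j + 1) := by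
  have hnonneg : (0 : ℝ) ≤ j * (n - j + 1) := by
    have : (j : ℝ) ≤ n + 1 := by exact_mod_cast hj
    apply mul_nonneg <;> linarith [(j.cast_nonneg : (0 : ℝ) ≤ j)]
  rw [fc, ← Complex.ofReal_pow, Real.sq_sqrt hnonneg]
  push_cast
  ring

lemma Sp_apply (n : ℕ) (j k : Fin (n + 1)) :
    Sp n j k = if (j : ℕ) = k + 1 then (fc n j : ℂ) else 0 := by
  simp only [Sp, of_apply, fc]
  split_ifs with h
  · rw [h]; push_cast; ring_nf
  · rfl

lemma Sm_apply (n : ℕ) (j k : Fin (n + 1)) :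
    Sm n j k = if (k : ℕ) = j + 1 then (fc n k : ℂ) else 0 := by
  rw [Sm, conjTranspose_apply, Sp_apply]
  split_ifs <;> simp

lemma S3_mulVec (n : ℕ) (c : ℕ → ℂ) :
    (S3 n *ᵥ fun k => c k) = fun j : Fin (n + 1) => ((j : ℂ) - n / 2) * c j :=
  funext fun j => mulVec_diagonal _ _ j

-- At `j = 0` the truncated `j - 1` is harmless, since `fc n 0 = 0`.
lemma Sp_mulVec (n : ℕ) (c : ℕ → ℂ) :
    (Sp n *ᵥ fun k => c k) = fun j : Fin (n + 1) => (fc n j : ℂ) * c (j - 1) := by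
  funext j
  simp only [mulVec, dotProduct, Sp_apply, ite_mul, zero_mul]
  induction j using Fin.cases with
  | zero => simp [fc_zero]
  | succ i => simp [eq_comm (a := (i : ℕ)), Fin.sum_ite_val_eq]

lemma Sm_mulVec (n : ℕ) (c : ℕ → ℂ) :
    (Sm n *ᵥ fun k => c k) = fun j : Fin (n + 1) => (fc n (j + 1) : ℂ) * c (j + 1) := by
  funext j
  simp only [mulVec, dotProduct, Sm_apply, ite_mul, zero_mul, Fin.sum_ite_val_eq]
  split_ifs with h
  · rfl
  · rw [show (j : ℕ) = n by omega, fc_succ_self, Complex.ofReal_zero, zero_mul]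

lemma lie_S3_Sp (n : ℕ) : ⁅S3 n, Sp n⁆ = Sp n := by
  refine ext_of_mulVec_val fun c => ?_
  rw [Ring.lie_def, sub_mulVec, ← mulVec_mulVec, ← mulVec_mulVec, Sp_mulVec, S3_mulVec,
    S3_mulVec n (fun i => fc n i * c (i - 1)), Sp_mulVec n (fun i => (i - n / 2) * c i)]
  funext j
  rcases Nat.eq_zero_or_pos j with hj | hj
  · simp [hj, fc_zero]
  · simp only [Pi.sub_apply]
    push_cast [Nat.cast_sub hj]
    ring

lemma lie_S3_Sm (n : ℕ) : ⁅S3 n, Sm n⁆ = -Sm n := by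
  refine ext_of_mulVec_val fun c => ?_
  rw [Ring.lie_def, sub_mulVec, neg_mulVec, ← mulVec_mulVec, ← mulVec_mulVec, Sm_mulVec,
    S3_mulVec, S3_mulVec n (fun i => fc n (i + 1) * c (i + 1)),
    Sm_mulVec n (fun i => (i - n / 2) * c i)]
  funext j
  simp only [Pi.sub_apply, Pi.neg_apply]
  push_cast
  ring

lemma lie_Sp_Sm (n : ℕ) : ⁅Sp n, Sm n⁆ = 2 • S3 n := by
  refine ext_of_mulVec_val fun c => ?_
  rw [Ring.lie_def, sub_mulVec, smul_mulVec, ← mulVec_mulVec, ← mulVec_mulVec, Sm_mulVec,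
    Sp_mulVec, S3_mulVec, Sp_mulVec n (fun i => fc n (i + 1) * c (i + 1)),
    Sm_mulVec n (fun i => fc n i * c (i - 1))]
  funext j
  have hlower : (fc n j : ℂ) * (fc n (j - 1 + 1) * c (j - 1 + 1)) = j * (n - j + 1) * c j := by
    rcases Nat.eq_zero_or_pos j with hj | hj
    · simp [hj, fc_zero]
    · rw [Nat.sub_add_cancel hj, ← mul_assoc, ← sq, fc_sq (by omega)]
  have hraise : (fc n (j + 1) : ℂ) * (fc n (j + 1) * c (j + 1 - 1)) =
      (j + 1) * (n - j) * c j := by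
    rw [Nat.add_sub_cancel, ← mul_assoc, ← sq, fc_sq (by omega)]
    push_cast
    ring
  simp only [Pi.sub_apply, Pi.smul_apply, hlower, hraise, nsmul_eq_mul]
  push_cast
  ring

lemma isLadderTriple_spin (n : ℕ) : IsLadderTriple (S3 n) (Sp n) (Sm n) :=
  ⟨lie_S3_Sp n, lie_S3_Sm n, lie_Sp_Sm n⟩

lemma S3_isHermitian (n : ℕ) : (S3 n).IsHermitian := by
  rw [S3, isHermitian_diagonal_iff]
  intro j
  simp [IsSelfAdjoint]

lemma S2_isHermitian (n : ℕ) : (S2 n).IsHermitian := by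
  rw [IsHermitian, S2, conjTranspose_smul, conjTranspose_sub, Sm, conjTranspose_conjTranspose,
    ← neg_sub, smul_neg, ← neg_smul]
  congr 1
  simp

section Rotation

open scoped Norms.Operator

lemma conjTranspose_Rot_mul_mul_Rot (n : ℕ) (φ θ ψ : ℝ) (X : Matrix (Fin (n + 1)) (Fin (n + 1)) ℂ) :
    (Rot n φ θ ψ)ᴴ * X * Rot n φ θ ψ =
      expConj ((I * ψ) • S3 n) (expConj ((I * θ) • S2 n) (expConj ((I * φ) • S3 n) X)) := by
  rw [Rot, conjTranspose_mul, conjTranspose_mul,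
    (S3_isHermitian n).conjTranspose_exp_neg_I_mul_smul,
    (S2_isHermitian n).conjTranspose_exp_neg_I_mul_smul,
    (S3_isHermitian n).conjTranspose_exp_neg_I_mul_smul]
  simp only [expConj_apply, neg_mul, neg_smul, mul_assoc]
  -- `Rot` and `expConj` see the matrix exponential through different, defeq, topologies
  rfl

lemma conjTranspose_Rot_mul_Sp_mul_Rot (n : ℕ) (φ θ ψ : ℝ) :
    (Rot n φ θ ψ)ᴴ * Sp n * Rot n φ θ ψ =
      Complex.exp (I * φ) • (Complex.sin θ • S3 n +
        ((1 + Complex.cos θ) / 2 * Complex.exp (I * ψ)) • Sp n -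
        ((1 - Complex.cos θ) / 2 * Complex.exp (-(I * ψ))) • Sm n) := by
  rw [conjTranspose_Rot_mul_mul_Rot, S2, (isLadderTriple_spin n).expConj_eulerRotation_raise]

end Rotation

lemma expectation_S3 (n : ℕ) (c : ℕ → ℂ) :
    star (fun j : Fin (n + 1) => c j) ⬝ᵥ (S3 n *ᵥ fun j => c j) = A0 n c := by
  rw [S3_mulVec, A0, dotProduct, ← Fin.sum_univ_eq_sum_range]
  push_cast
  refine Finset.sum_congr rfl fun j _ => ?_
  rw [Pi.star_apply, ← Complex.conj_mul', RCLike.star_def]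
  ring

lemma expectation_Sp (n : ℕ) (c : ℕ → ℂ) :
    star (fun j : Fin (n + 1) => c j) ⬝ᵥ (Sp n *ᵥ fun j => c j) =
      ∑ j ∈ Finset.Icc 1 n, (fc n j : ℂ) * (starRingEnd ℂ (c j) * c (j - 1)) := by
  simp only [Sp_mulVec, dotProduct, Pi.star_apply]
  rw [Fin.sum_univ_eq_sum_range (fun j => star (c j) * (fc n j * c (j - 1))),
    Finset.range_eq_Ico, Finset.sum_eq_sum_Ico_succ_bot (Nat.succ_pos n), fc_zero]
  simp only [Complex.ofReal_zero, zero_mul, mul_zero, zero_add]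
  refine Finset.sum_congr rfl fun j _ => ?_
  rw [RCLike.star_def]
  ring

lemma A2_eq (n : ℕ) (c : ℕ → ℂ) (φ θ ψ : ℝ) :
    A2 n c φ θ ψ = Complex.exp (I * φ) *
      ((1 + Real.cos θ) / 2 * Complex.exp (I * ψ) *
          (star (fun j : Fin (n + 1) => c j) ⬝ᵥ (Sp n *ᵥ fun j => c j)) -
        (1 - Real.cos θ) / 2 * Complex.exp (-(I * ψ)) *
          starRingEnd ℂ (star (fun j : Fin (n + 1) => c j) ⬝ᵥ (Sp n *ᵥ fun j => c j))) := by
  simp only [expectation_Sp, map_sum, map_mul, Complex.conj_ofReal, Complex.conj_conj, A2,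
    Finset.mul_sum, ← Finset.sum_sub_distrib]
  refine Finset.sum_congr rfl fun j _ => ?_
  ring

theorem expectation_ladder_general (n : ℕ) (c : ℕ → ℂ)
    (φ θ ψ : ℝ) :
    star (Rot n φ θ ψ *ᵥ fun j : Fin (n+1) => c (j : ℕ)) ⬝ᵥ
        (Sp n *ᵥ (Rot n φ θ ψ *ᵥ fun j : Fin (n+1) => c (j : ℕ))) =
      ((A0 n c : ℝ) : ℂ) * ((Real.sin θ : ℝ) : ℂ) * Complex.exp (Complex.I * (φ : ℂ)) +
        A2 n c φ θ ψ ∧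
    star (Rot n φ θ ψ *ᵥ fun j : Fin (n+1) => c (j : ℕ)) ⬝ᵥ
        (Sm n *ᵥ (Rot n φ θ ψ *ᵥ fun j : Fin (n+1) => c (j : ℕ))) =
      (starRingEnd ℂ)
        (star (Rot n φ θ ψ *ᵥ fun j : Fin (n+1) => c (j : ℕ)) ⬝ᵥ
          (Sp n *ᵥ (Rot n φ θ ψ *ᵥ fun j : Fin (n+1) => c (j : ℕ)))) := by
  have hSm (w : Fin (n + 1) → ℂ) :
      star w ⬝ᵥ (Sm n *ᵥ w) = starRingEnd ℂ (star w ⬝ᵥ (Sp n *ᵥ w)) :=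
    star_dotProduct_conjTranspose_mulVec _ _
  refine ⟨?_, hSm _⟩
  rw [star_mulVec_dotProduct_mulVec_mulVec, conjTranspose_Rot_mul_Sp_mul_Rot]
  simp only [smul_mulVec, add_mulVec, sub_mulVec, dotProduct_smul, dotProduct_add,
    dotProduct_sub, smul_eq_mul]
  rw [hSm, expectation_S3, A2_eq]
  push_cast
  ring

/-- Expectation values of the ladder operators in a general coherent state:
`⟨R(Ω)Ψ₀, S₊ R(Ω)Ψ₀⟩ = A₀ sin θ e^{iφ} + A₂(Ω)` and
`⟨R(Ω)Ψ₀, S₋ R(Ω)Ψ₀⟩ = conj ⟨R(Ω)Ψ₀, S₊ R(Ω)Ψ₀⟩`. -/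
theorem expectation_ladder (n : ℕ) (c : ℕ → ℂ)
    (hc : ∑ j ∈ Finset.range (n+1), ‖c j‖ ^ 2 = 1)
    (φ θ ψ : ℝ) :
    star (Rot n φ θ ψ *ᵥ fun j : Fin (n+1) => c (j : ℕ)) ⬝ᵥ
        (Sp n *ᵥ (Rot n φ θ ψ *ᵥ fun j : Fin (n+1) => c (j : ℕ))) =
      ((A0 n c : ℝ) : ℂ) * ((Real.sin θ : ℝ) : ℂ) * Complex.exp (Complex.I * (φ : ℂ)) +
        A2 n c φ θ ψ ∧
    star (Rot n φ θ ψ *ᵥ fun j : Fin (n+1) => c (j : ℕ)) ⬝ᵥ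
        (Sm n *ᵥ (Rot n φ θ ψ *ᵥ fun j : Fin (n+1) => c (j : ℕ))) =
      (starRingEnd ℂ)
        (star (Rot n φ θ ψ *ᵥ fun j : Fin (n+1) => c (j : ℕ)) ⬝ᵥ
          (Sp n *ᵥ (Rot n φ θ ψ *ᵥ fun j : Fin (n+1) => c (j : ℕ)))) :=
  expectation_ladder_general n c φ θ ψ
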